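/- Blind division agreement with rewrite-class disagreement: for every token t, distinct tokens t₁ ≠ t₂, rationals 0 < lo < hi, and dimension tag d, the expressions e₁ = Div (Meas t lo hi d) (Meas t lo hi d) and e₂ = Div (Meas t₁ lo hi d) (Meas t₂ lo hi d) satisfy forgetTokens e₁ = forgetTokens e₂ (hence BlindEncl (forgetTokens e₁) = BlindEncl (forgetTokens e₂)), yet Interchangeable e₁ (Exact 1 d) holds while OneWayOnly e₂ (Exact 1 d) holds. -/

import Mathlib

abbrev Token := ℕ

inductive Dim where
  | base
deriving DecidableEq

inductive Expr where
  | Exact (q : ℚ) (d : Dim)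
  | Meas (t : Token) (lo hi : ℚ) (d : Dim)
  | Add (a b : Expr)
  | Sub (a b : Expr)
  | Mul (a b : Expr)
  | Div (a b : Expr)
  | Neg (a : Expr)

abbrev TokenEnv := Token → ℚ

def TokenConsistent (σ : TokenEnv) : Expr → Prop
  | .Exact _ _ => True
  | .Meas t lo hi _ => lo ≤ σ t ∧ σ t ≤ hi
  | .Add a b => TokenConsistent σ a ∧ TokenConsistent σ b
  | .Sub a b => TokenConsistent σ a ∧ TokenConsistent σ b
  | .Mul a b => TokenConsistent σ a ∧ TokenConsistent σ b
  | .Div a b => TokenConsistent σ a ∧ TokenConsistent σ b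
  | .Neg a => TokenConsistent σ a

def eval (σ : TokenEnv) : Expr → ℚ
  | .Exact q _ => q
  | .Meas t _ _ _ => σ t
  | .Add a b => eval σ a + eval σ b
  | .Sub a b => eval σ a - eval σ b
  | .Mul a b => eval σ a * eval σ b
  | .Div a b => eval σ a / eval σ b
  | .Neg a => - eval σ a

def Encl (e : Expr) : Set ℚ := {v : ℚ | ∃ σ : TokenEnv, TokenConsistent σ e ∧ eval σ e = v}

def RewritesTo (e e' : Expr) : Prop := Encl e' ⊆ Encl e

def Interchangeable (e e' : Expr) : Prop := Encl e = Encl e'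

def OneWayOnly (e e' : Expr) : Prop := RewritesTo e e' ∧ ¬ RewritesTo e' e

inductive BlindExpr where
  | BlindExact (q : ℚ) (d : Dim)
  | BlindMeas (lo hi : ℚ) (d : Dim)
  | Add (a b : BlindExpr)
  | Sub (a b : BlindExpr)
  | Mul (a b : BlindExpr)
  | Div (a b : BlindExpr)
  | Neg (a : BlindExpr)

def forgetTokens : Expr → BlindExpr
  | .Exact q d => .BlindExact q d
  | .Meas _ lo hi d => .BlindMeas lo hi d
  | .Add a b => .Add (forgetTokens a) (forgetTokens b)
  | .Sub a b => .Sub (forgetTokens a) (forgetTokens b)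
  | .Mul a b => .Mul (forgetTokens a) (forgetTokens b)
  | .Div a b => .Div (forgetTokens a) (forgetTokens b)
  | .Neg a => .Neg (forgetTokens a)

def BlindEncl : BlindExpr → Set ℚ
  | .BlindExact q _ => {q}
  | .BlindMeas lo hi _ => {v : ℚ | lo ≤ v ∧ v ≤ hi}
  | .Add a b => {v : ℚ | ∃ x ∈ BlindEncl a, ∃ y ∈ BlindEncl b, x + y = v}
  | .Sub a b => {v : ℚ | ∃ x ∈ BlindEncl a, ∃ y ∈ BlindEncl b, x - y = v}
  | .Mul a b => {v : ℚ | ∃ x ∈ BlindEncl a, ∃ y ∈ BlindEncl b, x * y = v}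
  | .Div a b => {v : ℚ | ∃ x ∈ BlindEncl a, ∃ y ∈ BlindEncl b, x / y = v}
  | .Neg a => {v : ℚ | ∃ x ∈ BlindEncl a, -x = v}

/-!
Token-aware enclosures remember that both occurrences of `t` in `t / t` denote the same
measurement, so with `0 < lo` that quotient is exactly `1`. Distinct tokens vary independently,
so `t₁ / t₂` ranges over the whole quotient `[lo, hi] / [lo, hi]`, which contains both `1` and
`lo / hi < 1`. The blind view erases exactly this distinction: both expressions forget to the
same tree.
-/

open Set

theorem encl_exact (q : ℚ) (d : Dim) : Encl (.Exact q d) = {q} := by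
  ext v
  simp [Encl, TokenConsistent, eval, eq_comm]

theorem rewritesTo_exact_iff {e : Expr} {q : ℚ} {d : Dim} :
    RewritesTo e (.Exact q d) ↔ q ∈ Encl e := by
  rw [RewritesTo, encl_exact, singleton_subset_iff]

theorem exact_rewritesTo_iff {e : Expr} {q : ℚ} {d : Dim} :
    RewritesTo (.Exact q d) e ↔ Encl e ⊆ {q} := by
  rw [RewritesTo, encl_exact]

theorem encl_div_meas_self {t : Token} {lo hi : ℚ} (hpos : 0 < lo) (hle : lo ≤ hi)
    (d₁ d₂ : Dim) : Encl (.Div (.Meas t lo hi d₁) (.Meas t lo hi d₂)) = {1} := by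
  refine Subset.antisymm ?_ (singleton_subset_iff.2 ?_)
  · rintro v ⟨σ, ⟨⟨hlo, -⟩, -⟩, rfl⟩
    exact div_self (hpos.trans_le hlo).ne'
  · exact ⟨fun _ => lo, ⟨⟨le_rfl, hle⟩, ⟨le_rfl, hle⟩⟩, div_self hpos.ne'⟩

theorem encl_div_meas_of_ne {t₁ t₂ : Token} (hne : t₁ ≠ t₂) (lo₁ hi₁ lo₂ hi₂ : ℚ)
    (d₁ d₂ : Dim) :
    Encl (.Div (.Meas t₁ lo₁ hi₁ d₁) (.Meas t₂ lo₂ hi₂ d₂))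
      = image2 (· / ·) (Icc lo₁ hi₁) (Icc lo₂ hi₂) := by
  ext v
  constructor
  · rintro ⟨σ, ⟨hσ₁, hσ₂⟩, rfl⟩
    exact ⟨σ t₁, hσ₁, σ t₂, hσ₂, rfl⟩
  · rintro ⟨x, hx, y, hy, rfl⟩
    refine ⟨fun n => if n = t₁ then x else y, ⟨?_, ?_⟩, ?_⟩
    · simpa [TokenConsistent] using hx
    · simpa [TokenConsistent, hne.symm] using hy
    · simp [eval, hne.symm]

theorem blind_division_patterns_agree_but_rewrite_classes_differ
    (t t₁ t₂ : Token) (hne : t₁ ≠ t₂) (lo hi : ℚ) (hpos : 0 < lo) (hlt : lo < hi) (d : Dim) :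
    forgetTokens (Expr.Div (.Meas t lo hi d) (.Meas t lo hi d))
      = forgetTokens (Expr.Div (.Meas t₁ lo hi d) (.Meas t₂ lo hi d)) ∧
    BlindEncl (forgetTokens (Expr.Div (.Meas t lo hi d) (.Meas t lo hi d)))
      = BlindEncl (forgetTokens (Expr.Div (.Meas t₁ lo hi d) (.Meas t₂ lo hi d))) ∧
    Interchangeable (.Div (.Meas t lo hi d) (.Meas t lo hi d)) (.Exact 1 d) ∧
    OneWayOnly (.Div (.Meas t₁ lo hi d) (.Meas t₂ lo hi d)) (.Exact 1 d) := by
  have hlo : lo ∈ Icc lo hi := left_mem_Icc.2 hlt.le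
  have hhi : hi ∈ Icc lo hi := right_mem_Icc.2 hlt.le
  have hquot : lo / hi < 1 := (div_lt_one (hpos.trans hlt)).2 hlt
  refine ⟨rfl, rfl, ?_, ?_, ?_⟩
  · rw [Interchangeable, encl_div_meas_self hpos hlt.le, encl_exact]
  · rw [rewritesTo_exact_iff, encl_div_meas_of_ne hne]
    exact ⟨lo, hlo, lo, hlo, div_self hpos.ne'⟩
  · rw [exact_rewritesTo_iff, encl_div_meas_of_ne hne]
    intro hsub
    exact hquot.ne (hsub ⟨lo, hlo, hi, hhi, rfl⟩)
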